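/- arXiv:2202.10427 — 3 statements merged into one kernel-verified Lean document; each statement's English description precedes it below -/
import Mathlib

section
/- Let l ≥ 0 be an integer and let β₁,…,β_l ∈ ℂ satisfy |β_i| ≥ 1 for all i. Then for every integer d ≥ 1, limsup_{n→∞} Re(β₁^{dn} + ⋯ + β_l^{dn}) ≥ l. -/
/-!
Write `Re(βᵐ) = |β|ᵐ cos(m arg β)`; once the cosine is nonnegative this is at least
`cos(m arg β)` because `|β| ≥ 1`. In the compact group `(ℝ/2πℤ)ˡ`, `0` is a cluster point of
the orbit `n • θ` of any `θ`, so for infinitely many `n` all the angles `n d arg βᵢ`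
are simultaneously close to `0`, and the sum of real parts is then at least `l c` for any
fixed `c < 1`.
-/

open Filter Topology

instance Real.Angle.compactSpace : CompactSpace Real.Angle :=
  haveI := Fact.mk Real.two_pi_pos
  inferInstanceAs (CompactSpace (AddCircle (2 * Real.pi)))

lemma Complex.re_pow_eq_norm_pow_mul_angle_cos (z : ℂ) (n : ℕ) :
    (z ^ n).re = ‖z‖ ^ n * Real.Angle.cos (n • (z.arg : Real.Angle)) := by
  rw [← Complex.arg_pow_coe_angle, Real.Angle.cos_coe, ← norm_pow, Complex.norm_mul_cos_arg]

lemma Complex.angle_cos_le_re_pow {z : ℂ} (hz : 1 ≤ ‖z‖) {n : ℕ}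
    (hcos : 0 ≤ Real.Angle.cos (n • (z.arg : Real.Angle))) :
    Real.Angle.cos (n • (z.arg : Real.Angle)) ≤ (z ^ n).re := by
  rw [Complex.re_pow_eq_norm_pow_mul_angle_cos]
  exact le_mul_of_one_le_left hcos (one_le_pow₀ hz)

lemma Real.Angle.frequently_forall_lt_cos_nsmul {ι : Type*} [Finite ι] (θ : ι → Real.Angle)
    {c : ℝ} (hc : c < 1) : ∃ᶠ n : ℕ in atTop, ∀ i, c < Real.Angle.cos (n • θ i) := by
  have hU : IsOpen {φ : ι → Real.Angle | ∀ i, c < Real.Angle.cos (φ i)} := by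
    simp only [Set.ofPred_forall]
    exact isOpen_iInter_of_finite fun i =>
      isOpen_lt continuous_const (Real.Angle.continuous_cos.comp (continuous_apply i))
  exact (mapClusterPt_zero_atTop_nsmul θ).frequently (hU.mem_nhds fun _ => by simpa using hc)

lemma Complex.frequently_le_re_sum_pow {ι : Type*} [Fintype ι] {β : ι → ℂ}
    (hβ : ∀ i, 1 ≤ ‖β i‖) {c : ℝ} (hc₀ : 0 ≤ c) (hc₁ : c < 1) :
    ∃ᶠ n : ℕ in atTop, Fintype.card ι * c ≤ (∑ i, β i ^ n).re := by
  refine (Real.Angle.frequently_forall_lt_cos_nsmul (fun i => ((β i).arg : Real.Angle)) hc₁).mono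
    fun n hn => ?_
  rw [Complex.re_sum, ← nsmul_eq_mul, ← Finset.card_univ]
  exact Finset.card_nsmul_le_sum _ _ _ fun i _ =>
    (hn i).le.trans (Complex.angle_cos_le_re_pow (hβ i) (hc₀.trans (hn i).le))

lemma EReal.le_limsup_of_frequently_mul_le {α : Type*} {f : Filter α} {u : α → ℝ} {a : ℝ}
    (h : ∀ c ∈ Set.Ioo (0 : ℝ) 1, ∃ᶠ x in f, a * c ≤ u x) :
    (a : EReal) ≤ limsup (fun x => (u x : EReal)) f := by
  have hlim : Tendsto (fun c : ℝ => ((a * c : ℝ) : EReal)) (𝓝[<] 1) (𝓝 a) := by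
    refine ((continuous_coe_real_ereal.comp (continuous_const.mul continuous_id)).tendsto' 1 _
      ?_).mono_left nhdsWithin_le_nhds
    simp
  refine le_of_tendsto hlim <| mem_of_superset (Ioo_mem_nhdsLT one_pos) fun c hc => ?_
  exact le_limsup_of_frequently_le <| (h c hc).mono fun x hx => EReal.coe_le_coe_iff.2 hx

theorem stmt8_general (l : ℕ) (β : Fin l → ℂ) (hβ : ∀ i, 1 ≤ ‖β i‖)
    (d : ℕ) :
    (l : EReal) ≤
      Filter.limsup (fun n : ℕ => (((∑ i, β i ^ (d * n)).re : ℝ) : EReal))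
        Filter.atTop := by
  have hβd : ∀ i, 1 ≤ ‖β i ^ d‖ := fun i => by rw [norm_pow]; exact one_le_pow₀ (hβ i)
  have key := EReal.le_limsup_of_frequently_mul_le (f := atTop)
    (u := fun n : ℕ => (∑ i, β i ^ (d * n)).re) (a := l) fun c hc => by
      simpa only [pow_mul, Fintype.card_fin] using
        Complex.frequently_le_re_sum_pow hβd hc.1.le hc.2
  exact_mod_cast key

/-- Lemma 2.11 (real amplification): if `|βᵢ| ≥ 1` for all `i`, then for every
`d ≥ 1` the limsup (in `EReal`, as `n → ∞`) of `Re(β₁^{dn} + ⋯ + β_l^{dn})`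
is at least `l`. -/
theorem stmt8 (l : ℕ) (β : Fin l → ℂ) (hβ : ∀ i, 1 ≤ ‖β i‖)
    (d : ℕ) (hd : 1 ≤ d) :
    (l : EReal) ≤
      Filter.limsup (fun n : ℕ => (((∑ i, β i ^ (d * n)).re : ℝ) : EReal))
        Filter.atTop :=
  stmt8_general l β hβ d
end

section
/- Let k be a finite field with q elements, n ≥ 2 an integer, and f₂, f₃ ∈ k[x₁,…,x_n] homogeneous of degrees 2 and 3 respectively, with (f₂,f₃) ≠ (0,0). Let X := {[x₁:⋯:x_n:t] ∈ ℙ^n(k) : f₂(x)·t + f₃(x) = 0} (the k-points of a cubic hypersurface in ℙ^n singular at [0:⋯:0:1]; every cubic hypersurface in ℙ^n over k singular at [0:⋯:0:1] has this form). Then #X = #{[x] ∈ ℙ^{n−1}(k) : f₂(x) ≠ 0} + 1 + q·#{[x] ∈ ℙ^{n−1}(k) : f₂(x) = 0 and f₃(x) = 0}. -/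
/-! Split a point `(x, t)` of the affine cone into `x ∈ kⁿ` and `t ∈ k`. For fixed `x`, the
equation `f₂(x)·t + f₃(x) = 0` in `t` has one solution if `f₂(x) ≠ 0`, `q` solutions if
`f₂(x) = f₃(x) = 0`, and none otherwise; `x = 0` contributes the singular point. Since `kˣ` acts
freely on the nonzero vectors satisfying a homogeneous condition, each such set has exactly
`q - 1` times as many elements as its projective image, so the count of nonzero vectors
descends to the projective count. -/

open MvPolynomial

/-- Number of points of the projective subset of `ℙ^{m-1}(k)` cut out by the
(scale-invariant) condition `P`. -/
noncomputable def projCount {m : ℕ} (k : Type) [Field k]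
    (P : (Fin m → k) → Prop) : ℕ :=
  Nat.card {x : Fin m → k // x ≠ 0 ∧ P x} / (Nat.card k - 1)

theorem MvPolynomial.IsHomogeneous.eval_smul {σ R : Type*} [CommSemiring R]
    {f : MvPolynomial σ R} {d : ℕ} (hf : f.IsHomogeneous d) (c : R) (x : σ → R) :
    eval (c • x) f = c ^ d * eval x f := by
  rw [eval_eq, eval_eq, Finset.mul_sum]
  refine Finset.sum_congr rfl fun s hs => ?_
  have hdeg : ∑ i ∈ s.support, s i = d := by
    simpa [Finsupp.weight_apply, Finsupp.sum] using hf (mem_support_iff.mp hs)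
  simp only [Pi.smul_apply, smul_eq_mul, mul_pow, Finset.prod_mul_distrib,
    Finset.prod_pow_eq_pow_sum, hdeg]
  ring

theorem MvPolynomial.IsHomogeneous.eval_zero {σ R : Type*} [CommSemiring R]
    {f : MvPolynomial σ R} {d : ℕ} (hf : f.IsHomogeneous d) (hd : d ≠ 0) :
    eval 0 f = 0 := by
  simpa [zero_pow hd] using hf.eval_smul 0 0

theorem MvPolynomial.IsHomogeneous.eval_smul_eq_zero_iff {σ R : Type*} [CommSemiring R]
    [NoZeroDivisors R] {f : MvPolynomial σ R} {d : ℕ} (hf : f.IsHomogeneous d) {c : R}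
    (hc : c ≠ 0) (x : σ → R) :
    eval (c • x) f = 0 ↔ eval x f = 0 := by
  rw [hf.eval_smul, mul_eq_zero, or_iff_right (pow_ne_zero _ hc)]

section ScaleInvariant

variable (k : Type*) {V : Type*} [Field k] [AddCommGroup V] [Module k V]

def SubMulAction.nonzeroOf (P : V → Prop) (hP : ∀ (c : kˣ) v, P v → P (c • v)) :
    SubMulAction kˣ V where
  carrier := {v | v ≠ 0 ∧ P v}
  smul_mem' c v hv := ⟨(Units.nonZeroSubMul k V).smul_mem c hv.1, hP c v hv.2⟩

theorem card_units_dvd_card_nonzero (P : V → Prop) (hP : ∀ (c : kˣ) v, P v → P (c • v)) :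
    Nat.card kˣ ∣ Nat.card {v : V // v ≠ 0 ∧ P v} := by
  let S := SubMulAction.nonzeroOf k P hP
  have hfree (v : S) : MulAction.stabilizer kˣ v = ⊥ := by
    rw [S.stabilizer_of_subMul, Module.stabilizer_units_eq_bot_of_ne_zero k v.2.1]
  exact Dvd.intro_left _ <| (Nat.card_prod _ _).symm.trans
    (Nat.card_congr (MulAction.selfEquivOrbitsQuotientProd hfree)).symm

end ScaleInvariant

theorem Nat.card_subtype_ne_zero_and_add_one {M : Type*} [Zero M] [Finite M] {P : M → Prop}
    (h0 : P 0) :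
    Nat.card {x // x ≠ 0 ∧ P x} + 1 = Nat.card {x // P x} := by
  have hdiff : {x | x ≠ 0 ∧ P x} = {x | P x} \ {0} := by
    ext x
    simp [and_comm]
  rw [← Set.coe_ofPred, ← Set.coe_ofPred, Nat.card_coe_set_eq, Nat.card_coe_set_eq, hdiff]
  exact Set.ncard_sdiff_singleton_add_one h0

theorem Nat.card_subtype_ne_zero_and_of_not {M : Type*} [Zero M] {P : M → Prop} (h0 : ¬ P 0) :
    Nat.card {x // x ≠ 0 ∧ P x} = Nat.card {x // P x} :=
  Nat.card_congr <| Equiv.subtypeEquivRight fun x =>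
    and_iff_right_of_imp fun hx => by rintro rfl; exact h0 hx

variable {k : Type*} [Field k]

theorem card_mul_add_eq_zero [DecidableEq k] (a b : k) :
    Nat.card {t : k // a * t + b = 0} =
      (if a ≠ 0 then 1 else 0) + Nat.card k * (if a = 0 ∧ b = 0 then 1 else 0) := by
  by_cases ha : a = 0
  · subst ha
    by_cases hb : b = 0 <;> simp [hb]
  · have hsol (t : k) : a * t + b = 0 ↔ t = -b / a := by
      rw [eq_div_iff ha, add_eq_zero_iff_eq_neg, mul_comm]
    simp [hsol, ha]

theorem card_mul_add_eq_zero_prod [Finite k] {X : Type*} [Fintype X] (a b : X → k) :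
    Nat.card {p : X × k // a p.1 * p.2 + b p.1 = 0} =
      Nat.card {x // a x ≠ 0} + Nat.card k * Nat.card {x // a x = 0 ∧ b x = 0} := by
  classical
  rw [Nat.card_congr (Equiv.subtypeProdEquivSigmaSubtype fun x t => a x * t + b x = 0),
    Nat.card_sigma]
  simp only [card_mul_add_eq_zero, Finset.sum_add_distrib, ← Finset.mul_sum, ← Finset.card_filter,
    Nat.card_eq_fintype_card, Fintype.card_subtype]

theorem projCount_mul_card_sub_one (k : Type) [Field k] {m : ℕ} (P : (Fin m → k) → Prop)
    (hP : ∀ (c : kˣ) x, P x → P (c • x)) :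
    projCount k P * (Nat.card k - 1) = Nat.card {x // x ≠ 0 ∧ P x} := by
  rw [projCount, ← Nat.card_units]
  exact Nat.div_mul_cancel (card_units_dvd_card_nonzero k P hP)

theorem card_nonzero_cone_add_one [Finite k] {n : ℕ} (a b : (Fin n → k) → k) (ha : a 0 = 0)
    (hb : b 0 = 0) :
    Nat.card {y : Fin (n + 1) → k //
        y ≠ 0 ∧ a (Fin.init y) * y (Fin.last n) + b (Fin.init y) = 0} + 1 =
      Nat.card {x // x ≠ 0 ∧ a x ≠ 0} +
        Nat.card k * (Nat.card {x // x ≠ 0 ∧ a x = 0 ∧ b x = 0} + 1) := by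
  have := Fintype.ofFinite k
  have hinit : Fin.init (0 : Fin (n + 1) → k) = 0 := rfl
  rw [Nat.card_subtype_ne_zero_and_add_one (by simp [hinit, ha, hb]),
    Nat.card_subtype_ne_zero_and_of_not (by simp [ha]),
    Nat.card_subtype_ne_zero_and_add_one (P := fun x => a x = 0 ∧ b x = 0) ⟨ha, hb⟩,
    ← card_mul_add_eq_zero_prod]
  exact Nat.card_congr (((Fin.snocEquiv fun _ => k).symm.trans (Equiv.prodComm _ _)).subtypeEquiv
    fun y => Iff.rfl)

theorem stmt15_general (k : Type) [Field k] [Fintype k] (n : ℕ)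
    (f₂ f₃ : MvPolynomial (Fin n) k)
    (h2 : f₂.IsHomogeneous 2) (h3 : f₃.IsHomogeneous 3) :
    projCount k (fun y : Fin (n + 1) → k =>
        eval (fun i : Fin n => y (Fin.castSucc i)) f₂ * y (Fin.last n) +
          eval (fun i : Fin n => y (Fin.castSucc i)) f₃ = 0) =
      projCount k (fun x : Fin n → k => eval x f₂ ≠ 0) + 1 +
        Nat.card k *
          projCount k (fun x : Fin n → k => eval x f₂ = 0 ∧ eval x f₃ = 0) := by
  have hinv₂ (c : kˣ) (x : Fin n → k) (hx : eval x f₂ ≠ 0) : eval (c • x) f₂ ≠ 0 := by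
    rwa [Units.smul_def, ne_eq, h2.eval_smul_eq_zero_iff c.ne_zero]
  have hinv₂₃ (c : kˣ) (x : Fin n → k) (hx : eval x f₂ = 0 ∧ eval x f₃ = 0) :
      eval (c • x) f₂ = 0 ∧ eval (c • x) f₃ = 0 := by
    rwa [Units.smul_def, h2.eval_smul_eq_zero_iff c.ne_zero, h3.eval_smul_eq_zero_iff c.ne_zero]
  have hcount := card_nonzero_cone_add_one (fun x => eval x f₂) (fun x => eval x f₃)
    (h2.eval_zero two_ne_zero) (h3.eval_zero three_ne_zero)
  rw [← projCount_mul_card_sub_one k _ hinv₂, ← projCount_mul_card_sub_one k _ hinv₂₃] at hcount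
  obtain ⟨r, hr⟩ : ∃ r, Nat.card k = r + 1 := ⟨_, (Nat.succ_pred_eq_of_pos Nat.card_pos).symm⟩
  have hr0 : 0 < r := by have := Finite.one_lt_card (α := k); omega
  rw [hr, Nat.add_sub_cancel] at hcount
  conv_lhs => rw [projCount]
  rw [hr, Nat.add_sub_cancel]
  exact Nat.div_eq_of_eq_mul_left hr0 (Nat.add_right_cancel (hcount.trans (by ring)))

/-- Proposition 5.8 (point count of a cubic hypersurface with a rational singular
point): writing points of `ℙ^n` as `[x₁ : ⋯ : x_n : t]`, for the cubic
`f₂(x)·t + f₃(x) = 0` one has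
`#X = #{[x] : f₂(x) ≠ 0} + 1 + q·#{[x] : f₂(x) = f₃(x) = 0}`. -/
theorem stmt15 (k : Type) [Field k] [Fintype k] (n : ℕ) (hn : 2 ≤ n)
    (f₂ f₃ : MvPolynomial (Fin n) k)
    (h2 : f₂.IsHomogeneous 2) (h3 : f₃.IsHomogeneous 3)
    (hne : ¬ (f₂ = 0 ∧ f₃ = 0)) :
    projCount k (fun y : Fin (n + 1) → k =>
        eval (fun i : Fin n => y (Fin.castSucc i)) f₂ * y (Fin.last n) +
          eval (fun i : Fin n => y (Fin.castSucc i)) f₃ = 0) =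
      projCount k (fun x : Fin n → k => eval x f₂ ≠ 0) + 1 +
        Nat.card k *
          projCount k (fun x : Fin n → k => eval x f₂ = 0 ∧ eval x f₃ = 0) :=
  stmt15_general k n f₂ f₃ h2 h3
end

section
/- Let K be a field, n ≥ 2 an integer, and C ∈ K[x₀,…,x_n] a homogeneous cubic form. Let P₁, P₂ ∈ K[x₀,…,x_n] be homogeneous with deg P₂ = 2 and deg P₁ ∈ {1,2}, having no common nonconstant factor (so V(P₁,P₂) ⊆ ℙ^n is a complete intersection of dimension n−2), and suppose C lies in the ideal (P₁,P₂) (so the cubic hypersurface V(C) contains V(P₁,P₂)). Then there exist K-linearly independent linear forms L₁, L₂ ∈ K[x₀,…,x_n] with C ∈ (L₁,L₂); that is, V(C) contains a (1,1)-complete intersection (a codimension-2 linear subspace) of ℙ^n. -/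
open MvPolynomial

-- homogeneous component of a product with a homogeneous polynomial
lemma homComp_mul {σ : Type*} {K : Type*} [CommRing K]
    (A P : MvPolynomial σ K) (m k : ℕ) (hP : P.IsHomogeneous k) :
    homogeneousComponent (m + k) (A * P) = homogeneousComponent m A * P := by
  conv_lhs => rw [← sum_homogeneousComponent A, Finset.sum_mul, map_sum]
  have heach : ∀ i, homogeneousComponent (m + k) (homogeneousComponent i A * P)
      = if m + k = i + k then homogeneousComponent i A * P else 0 := fun i =>
    homogeneousComponent_of_mem
      ((mem_homogeneousSubmodule _ _).2
        (((homogeneousComponent_isHomogeneous i A)).mul hP))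
  simp_rw [heach, Nat.add_right_cancel_iff]
  rw [Finset.sum_ite_eq (Finset.range (A.totalDegree + 1)) m
    (fun i => homogeneousComponent i A * P)]
  split_ifs with h
  · rfl
  · rw [Finset.mem_range, not_lt] at h
    rw [homogeneousComponent_eq_zero _ _ (Nat.lt_of_succ_le h), zero_mul]

-- existence of a linear form independent from a nonzero polynomial
lemma exists_indep {n : ℕ} {K : Type} [Field K]
    (L : MvPolynomial (Fin (n + 1)) K) (hn : 2 ≤ n) (hL : L ≠ 0) :
    ∃ M : MvPolynomial (Fin (n + 1)) K, M.IsHomogeneous 1 ∧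
      LinearIndependent K ![L, M] := by
  obtain ⟨m, hm⟩ := ne_zero_iff.1 hL
  have : ∃ j : Fin (n + 1), m ≠ Finsupp.single j 1 := by
    by_contra h
    push_neg at h
    have h0 := h ⟨0, by omega⟩
    have h1 := h ⟨1, by omega⟩
    rw [h0] at h1
    have := Finsupp.single_left_injective (one_ne_zero (α := ℕ)) h1
    simp [Fin.ext_iff] at this
  obtain ⟨j, hj⟩ := this
  refine ⟨X j, isHomogeneous_X K j, LinearIndependent.pair_iff.2 fun s t hst => ?_⟩
  have hc := congrArg (coeff m) hst
  simp only [coeff_add, coeff_smul, coeff_X',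
    if_neg (fun h : Finsupp.single j 1 = m => hj h.symm),
    smul_eq_mul, mul_zero, add_zero, coeff_zero] at hc
  have hs : s = 0 := by
    rcases mul_eq_zero.1 hc with h | h
    · exact h
    · exact absurd h hm
  subst hs
  simp only [zero_smul, zero_add] at hst
  have ht := congrArg (coeff (Finsupp.single j 1)) hst
  simp [coeff_smul, coeff_X'] at ht
  exact ⟨rfl, ht⟩

-- if Cf is a multiple of a single linear form, the conclusion holds
lemma final_step {n : ℕ} {K : Type} [Field K] (hn : 2 ≤ n)
    (Cf L : MvPolynomial (Fin (n + 1)) K) (hL : L.IsHomogeneous 1)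
    (h : Cf ∈ Ideal.span ({L} : Set (MvPolynomial (Fin (n + 1)) K))) :
    ∃ L₁ L₂ : MvPolynomial (Fin (n + 1)) K,
      L₁.IsHomogeneous 1 ∧ L₂.IsHomogeneous 1 ∧
      LinearIndependent K ![L₁, L₂] ∧
      Cf ∈ Ideal.span ({L₁, L₂} : Set (MvPolynomial (Fin (n + 1)) K)) := by
  by_cases hL0 : L = 0
  · subst hL0
    have hCf : Cf = 0 := by
      simpa [Ideal.span_singleton_eq_bot.mpr rfl] using h
    obtain ⟨M, hM, hind⟩ := exists_indep (X 0 : MvPolynomial (Fin (n + 1)) K) hn (X_ne_zero 0)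
    exact ⟨X 0, M, isHomogeneous_X K 0, hM, hind, hCf ▸ Ideal.zero_mem _⟩
  · obtain ⟨M, hM, hind⟩ := exists_indep L hn hL0
    refine ⟨L, M, hL, hM, hind, Ideal.span_mono ?_ h⟩
    intro x hx; simp at hx; simp [hx]

/-- Lemma 5.6: if a cubic form `C` lies in the ideal generated by coprime forms
`P₁, P₂` with `deg P₂ = 2` and `deg P₁ ∈ {1,2}`, then `C` lies in the ideal
generated by two linearly independent linear forms (i.e. `V(C)` contains a
codimension-2 linear subspace of `ℙ^n`). -/
theorem stmt16 (K : Type) [Field K] (n : ℕ) (hn : 2 ≤ n)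
    (Cf P₁ P₂ : MvPolynomial (Fin (n + 1)) K) (hC : Cf.IsHomogeneous 3)
    (d₁ : ℕ) (hd₁ : d₁ = 1 ∨ d₁ = 2) (hP₁ : P₁.IsHomogeneous d₁) (hP₁0 : P₁ ≠ 0)
    (hP₂ : P₂.IsHomogeneous 2) (hP₂0 : P₂ ≠ 0)
    (hcop : IsRelPrime P₁ P₂)
    (hmem : Cf ∈ Ideal.span ({P₁, P₂} : Set (MvPolynomial (Fin (n + 1)) K))) :
    ∃ L₁ L₂ : MvPolynomial (Fin (n + 1)) K,
      L₁.IsHomogeneous 1 ∧ L₂.IsHomogeneous 1 ∧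
      LinearIndependent K ![L₁, L₂] ∧
      Cf ∈ Ideal.span ({L₁, L₂} : Set (MvPolynomial (Fin (n + 1)) K)) := by
  rw [Ideal.mem_span_pair] at hmem
  obtain ⟨A, B, hAB⟩ := hmem
  have e0 : homogeneousComponent 3 Cf = Cf := by
    rw [homogeneousComponent_of_mem ((mem_homogeneousSubmodule _ _).2 hC), if_pos rfl]
  rcases hd₁ with h1 | h2
  · -- d₁ = 1
    subst h1
    set A₂ := homogeneousComponent 2 A with hA₂def
    set L := homogeneousComponent 1 B with hLdef
    have key : Cf = A₂ * P₁ + L * P₂ := by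
      have e1 := homComp_mul A P₁ 2 1 hP₁
      have e2 := homComp_mul B P₂ 1 2 hP₂
      norm_num at e1 e2
      rw [← e0, ← hAB, map_add, e1, e2]
    by_cases hind : LinearIndependent K ![P₁, L]
    · exact ⟨P₁, L, hP₁, homogeneousComponent_isHomogeneous 1 B, hind,
        Ideal.mem_span_pair.2 ⟨A₂, P₂, by rw [key]; ring⟩⟩
    · rw [LinearIndependent.pair_iff] at hind
      push_neg at hind
      obtain ⟨s, t, hrel, hst⟩ := hind
      rw [smul_eq_C_mul, smul_eq_C_mul] at hrel
      by_cases ht : t = 0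
      · subst ht
        simp only [map_zero, zero_mul, add_zero] at hrel
        have hs : s ≠ 0 := fun h => hst h rfl
        exact absurd (by
          have := mul_eq_zero.1 hrel
          rcases this with h | h
          · exact absurd (by simpa using congrArg (coeff 0) h) hs
          · exact h) hP₁0
      · have htinv : (C t⁻¹ : MvPolynomial (Fin (n + 1)) K) * C t = 1 := by
          rw [← C_mul, inv_mul_cancel₀ ht, C_1]
        have hCf : Cf = (A₂ + C t⁻¹ * (- C s) * P₂) * P₁ := by
          linear_combination key + (C t⁻¹ * P₂) * hrel - (L * P₂) * htinv
        exact final_step hn Cf P₁ hP₁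
          (Ideal.mem_span_singleton'.2 ⟨_, hCf.symm⟩)
  · -- d₁ = 2
    subst h2
    set L₁ := homogeneousComponent 1 A with hL₁def
    set L₂ := homogeneousComponent 1 B with hL₂def
    have key : Cf = L₁ * P₁ + L₂ * P₂ := by
      have e1 := homComp_mul A P₁ 1 2 hP₁
      have e2 := homComp_mul B P₂ 1 2 hP₂
      norm_num at e1 e2
      rw [← e0, ← hAB, map_add, e1, e2]
    by_cases hind : LinearIndependent K ![L₁, L₂]
    · exact ⟨L₁, L₂, homogeneousComponent_isHomogeneous 1 A,
        homogeneousComponent_isHomogeneous 1 B, hind,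
        Ideal.mem_span_pair.2 ⟨P₁, P₂, by rw [key]; ring⟩⟩
    · rw [LinearIndependent.pair_iff] at hind
      push_neg at hind
      obtain ⟨s, t, hrel, hst⟩ := hind
      rw [smul_eq_C_mul, smul_eq_C_mul] at hrel
      by_cases hs : s = 0
      · subst hs
        simp only [map_zero, zero_mul, zero_add] at hrel
        have ht : t ≠ 0 := hst rfl
        have hL₂0 : L₂ = 0 := by
          rcases mul_eq_zero.1 hrel with h | h
          · exact absurd (by simpa using congrArg (coeff 0) h) ht
          · exact h
        have hCf : Cf = L₁ * P₁ := by rw [key, hL₂0, zero_mul, add_zero]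
        exact final_step hn Cf L₁ (homogeneousComponent_isHomogeneous 1 A)
          (Ideal.mem_span_singleton'.2 ⟨P₁, by rw [hCf]; ring⟩)
      · have hsinv : (C s⁻¹ : MvPolynomial (Fin (n + 1)) K) * C s = 1 := by
          rw [← C_mul, inv_mul_cancel₀ hs, C_1]
        have hCf : Cf = (C s⁻¹ * (- C t) * P₁ + P₂) * L₂ := by
          linear_combination key + (C s⁻¹ * P₁) * hrel - (L₁ * P₁) * hsinv
        exact final_step hn Cf L₂ (homogeneousComponent_isHomogeneous 1 B)
          (Ideal.mem_span_singleton'.2 ⟨_, hCf.symm⟩)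
end
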